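/- arXiv:1809.01695 — 2 statements merged into one kernel-verified Lean document; each statement's English description precedes it below -/
import Mathlib

section
/- Let H be a complex Hilbert space, S a closed subspace, J a signature operator (J* = J, J² = I), and α ∈ L(H) positive and invertible with (αJ)² = I (so that J_α := αJ is another signature operator of the Krein space (H, [·,·])). Let W ∈ L(H) satisfy (JW)* = JW. Then H = S ∔ α(S^⊥) is a direct sum; let P denote the bounded idempotent with range S and kernel α(S^⊥), and set a' := P(αJW)P and b' := P(αJW)(I − P). If JW is S-weakly complementable, i.e., range(P_S (JW) P_{S^⊥}) ⊆ range(|P_S (JW) P_S|^{1/2}), then for every bounded operator m on H such that α⁻¹m is selfadjoint and positive and m⁴ = α a'* α⁻¹ a', one has range(b') ⊆ range(m); that is, αJW is S-weakly complementable with respect to the inner product ⟨x,y⟩_α := ⟨α⁻¹x, y⟩. -/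
open ContinuousLinearMap

noncomputable section

variable {H : Type*} [NormedAddCommGroup H] [InnerProductSpace ℂ H] [CompleteSpace H]

/-- The orthogonal projection onto a closed subspace `S`, as an endomorphism of `H`. -/
def projL (S : Submodule ℂ H) [S.HasOrthogonalProjection] : H →L[ℂ] H :=
  S.subtypeL.comp S.orthogonalProjectionOnto

/-- The corner `a = P_S B P_S` of the block decomposition of `B` w.r.t. `H = S ⊕ Sᗮ`. -/
def blockA (B : H →L[ℂ] H) (S : Submodule ℂ H) [S.HasOrthogonalProjection] : H →L[ℂ] H :=
  projL S * B * projL S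

/-- The corner `b = P_S B P_{Sᗮ}` of the block decomposition of `B` w.r.t. `H = S ⊕ Sᗮ`. -/
def blockB (B : H →L[ℂ] H) (S : Submodule ℂ H) [S.HasOrthogonalProjection] : H →L[ℂ] H :=
  projL S * B * (1 - projL S)

/-- The corner `c = P_{Sᗮ} B P_{Sᗮ}` of the block decomposition of `B` w.r.t. `H = S ⊕ Sᗮ`. -/
def blockC (B : H →L[ℂ] H) (S : Submodule ℂ H) [S.HasOrthogonalProjection] : H →L[ℂ] H :=
  (1 - projL S) * B * (1 - projL S)

/-- `m = |a|^{1/2}`: `m` is the (unique) positive fourth root of `a⋆ a`. -/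
def IsSqrtAbs (a m : H →L[ℂ] H) : Prop :=
  m.IsPositive ∧ m ^ 4 = adjoint a * a

/-- `B` is `S`-weakly complementable: `range b ⊆ range |a|^{1/2}`. -/
def IsWeaklyComplementable (B : H →L[ℂ] H) (S : Submodule ℂ H)
    [S.HasOrthogonalProjection] : Prop :=
  ∃ m : H →L[ℂ] H, IsSqrtAbs (blockA B S) m ∧
    LinearMap.range (blockB B S : H →ₗ[ℂ] H) ≤ LinearMap.range (m : H →ₗ[ℂ] H)

/-- `B` is `S`-complementable: `H = S + B⁻¹(Sᗮ)`. -/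
def IsComplementable (B : H →L[ℂ] H) (S : Submodule ℂ H) : Prop :=
  S ⊔ Sᗮ.comap (B : H →ₗ[ℂ] H) = ⊤

/-- The set `P(B,S)` of `B`-selfadjoint bounded idempotents onto `S`. -/
def projSet (B : H →L[ℂ] H) (S : Submodule ℂ H) : Set (H →L[ℂ] H) :=
  {Q | Q * Q = Q ∧ LinearMap.range (Q : H →ₗ[ℂ] H) = S ∧ B * Q = adjoint Q * B}

/-- `Y` is the Schur complement `B_{/S} = [[0,0],[0, c - f⋆ u f]]`, where `f` is the reduced
solution of `b = |a|^{1/2} x` and `a = u |a|` is the polar decomposition of `a`. -/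
def IsSchur (B : H →L[ℂ] H) (S : Submodule ℂ H) [S.HasOrthogonalProjection]
    (Y : H →L[ℂ] H) : Prop :=
  ∃ m u f : H →L[ℂ] H,
    IsSqrtAbs (blockA B S) m ∧
    LinearMap.ker (u : H →ₗ[ℂ] H) = LinearMap.ker (blockA B S : H →ₗ[ℂ] H) ∧
    (∀ x ∈ (LinearMap.ker (blockA B S : H →ₗ[ℂ] H))ᗮ, ‖u x‖ = ‖x‖) ∧
    blockA B S = u * m ^ 2 ∧
    m * f = blockB B S ∧
    LinearMap.range (f : H →ₗ[ℂ] H) ≤ (LinearMap.range (m : H →ₗ[ℂ] H)).topologicalClosure ∧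
    Y = blockC B S - adjoint f * (u * f)

/-- The set `M⁻(B,T)`. -/
def Mminus (B : H →L[ℂ] H) (T : Submodule ℂ H) : Set (H →L[ℂ] H) :=
  {X | IsSelfAdjoint X ∧ (B - X).IsPositive ∧ LinearMap.range (X : H →ₗ[ℂ] H) ≤ T}

/-- The set `M⁺(B,T)`. -/
def Mplus (B : H →L[ℂ] H) (T : Submodule ℂ H) : Set (H →L[ℂ] H) :=
  {X | IsSelfAdjoint X ∧ (X - B).IsPositive ∧ LinearMap.range (X : H →ₗ[ℂ] H) ≤ T}

/-- `Y` is the Loewner maximum of `M`. -/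
def IsMaxOf (M : Set (H →L[ℂ] H)) (Y : H →L[ℂ] H) : Prop :=
  Y ∈ M ∧ ∀ X ∈ M, (Y - X).IsPositive

/-- `Z` is the Loewner minimum of `M`. -/
def IsMinOf (M : Set (H →L[ℂ] H)) (Z : H →L[ℂ] H) : Prop :=
  Z ∈ M ∧ ∀ X ∈ M, (X - Z).IsPositive

/-- `Z` is the greatest lower bound of `M` in the Loewner order on selfadjoint operators. -/
def IsGLBOf (M : Set (H →L[ℂ] H)) (Z : H →L[ℂ] H) : Prop :=
  IsSelfAdjoint Z ∧ (∀ X ∈ M, (X - Z).IsPositive) ∧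
    ∀ F : H →L[ℂ] H, IsSelfAdjoint F → (∀ X ∈ M, (X - F).IsPositive) → (Z - F).IsPositive

/-- `Y` is the least upper bound of `M` in the Loewner order on selfadjoint operators. -/
def IsLUBOf (M : Set (H →L[ℂ] H)) (Y : H →L[ℂ] H) : Prop :=
  IsSelfAdjoint Y ∧ (∀ X ∈ M, (Y - X).IsPositive) ∧
    ∀ F : H →L[ℂ] H, IsSelfAdjoint F → (∀ X ∈ M, (F - X).IsPositive) → (F - Y).IsPositive

/-- A decomposition `S = S₊ ⊕_B S₋` into a `B`-nonnegative and a `B`-nonpositive part. -/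
def IsWDecomp (B : H →L[ℂ] H) (S Sp Sm : Submodule ℂ H) : Prop :=
  (∀ x ∈ Sp, ∀ y ∈ Sm, (inner ℂ x y : ℂ) = 0) ∧
  Sp ⊔ Sm = S ∧
  (∀ x ∈ Sp, 0 ≤ (inner ℂ (B x) x : ℂ).re) ∧
  (∀ x ∈ Sm, (inner ℂ (B x) x : ℂ).re ≤ 0) ∧
  (∀ x ∈ Sp, ∀ y ∈ Sm, (inner ℂ (B x) y : ℂ) = 0)

/-- `Y` is Krein's shorted operator `B_{/T}` of the positive operator `B` to `T`:
the Loewner maximum of `{X : 0 ≤ X ≤ B, range X ⊆ Tᗮ}`. -/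
def IsShort (B : H →L[ℂ] H) (T : Submodule ℂ H) (Y : H →L[ℂ] H) : Prop :=
  (Y.IsPositive ∧ (B - Y).IsPositive ∧ LinearMap.range (Y : H →ₗ[ℂ] H) ≤ Tᗮ) ∧
    ∀ X : H →L[ℂ] H, X.IsPositive → (B - X).IsPositive → LinearMap.range (X : H →ₗ[ℂ] H) ≤ Tᗮ →
      (Y - X).IsPositive

/-- The set `{R⋆ Q⋆ B Q R : Q² = Q, N(Q) = T}`. -/
def comprSet2 (B R : H →L[ℂ] H) (T : Submodule ℂ H) : Set (H →L[ℂ] H) :=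
  {X | ∃ Q : H →L[ℂ] H, Q * Q = Q ∧ LinearMap.ker (Q : H →ₗ[ℂ] H) = T ∧
    X = adjoint R * (adjoint Q * B * Q) * R}

/-- The set `{Q⋆ B Q : Q² = Q, N(Q) = S}`. -/
def comprSet1 (B : H →L[ℂ] H) (S : Submodule ℂ H) : Set (H →L[ℂ] H) :=
  {X | ∃ Q : H →L[ℂ] H, Q * Q = Q ∧ LinearMap.ker (Q : H →ₗ[ℂ] H) = S ∧ X = adjoint Q * B * Q}

/-- The set `N⁻(W,T)` of the Krein space `(H, [x,y] = ⟨Jx,y⟩)`. -/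
def Nminus (J W : H →L[ℂ] H) (T : Submodule ℂ H) : Set (H →L[ℂ] H) :=
  {X | IsSelfAdjoint (J * X) ∧ (J * (W - X)).IsPositive ∧ LinearMap.range (X : H →ₗ[ℂ] H) ≤ T}

/-- The set `N⁺(W,T)` of the Krein space `(H, [x,y] = ⟨Jx,y⟩)`. -/
def Nplus (J W : H →L[ℂ] H) (T : Submodule ℂ H) : Set (H →L[ℂ] H) :=
  {X | IsSelfAdjoint (J * X) ∧ (J * (X - W)).IsPositive ∧ LinearMap.range (X : H →ₗ[ℂ] H) ≤ T}

/-- `Y` is the maximum of `M` in the Krein order induced by `J`. -/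
def KMaxOf (J : H →L[ℂ] H) (M : Set (H →L[ℂ] H)) (Y : H →L[ℂ] H) : Prop :=
  Y ∈ M ∧ ∀ X ∈ M, (J * (Y - X)).IsPositive

/-- `Z` is the minimum of `M` in the Krein order induced by `J`. -/
def KMinOf (J : H →L[ℂ] H) (M : Set (H →L[ℂ] H)) (Z : H →L[ℂ] H) : Prop :=
  Z ∈ M ∧ ∀ X ∈ M, (J * (X - Z)).IsPositive

/-- `E` is a densely defined projection (idempotent) with kernel `N`. -/
def IsDDProj (N : Submodule ℂ H) (E : H →ₗ.[ℂ] H) : Prop :=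
  Dense (E.domain : Set H) ∧
  (∃ h : ∀ x : E.domain, E x ∈ E.domain, ∀ x : E.domain, E ⟨E x, h x⟩ = E x) ∧
  (LinearMap.ker E.toFun).map E.domain.subtype = N

/-- `G` is the (everywhere defined, bounded) composition `E ∘ T`; in particular
`range T ⊆ dom E`. -/
def IsBddComp (E : H →ₗ.[ℂ] H) (T G : H →L[ℂ] H) : Prop :=
  ∃ h : ∀ x : H, T x ∈ E.domain, ∀ x : H, G x = E ⟨T x, h x⟩

/-!
Write `α = ρ²` with `ρ = α^{1/2}` selfadjoint and invertible; conjugation by `ρ` turns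
`⟪·, ·⟫_α` into `⟪·, ·⟫`. The idempotent `P` is `⟪·, ·⟫_α`-selfadjoint, i.e. `P α` is selfadjoint,
so `C = ρ⁻¹ P α` is bounded below on `S`, the operator `m̂ = ρ⁻¹ m ρ` is the positive fourth root of
`(C a C*)²` with `a = P_S (JW) P_S`, and `b' = ρ C P_S (JW) (1 - P)`. As
`range (P_S JW) ⊆ range |a|^{1/2} = range m₀` by hypothesis, it remains to show
`range (C m₀) ⊆ range m̂`. Since `C` is bounded below on `S ⊇ range a`,
`‖C m₀² C* u‖ ≤ ‖C‖ ‖a C* u‖ ≲ ‖C a C* u‖ = ‖m̂² u‖`; taking operator square roots gives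
`C m₀² C* ≤ μ m̂²`, and Douglas' lemma concludes.
-/

theorem IsSelfAdjoint.val_inv {R : Type*} [Monoid R] [StarMul R] {u : Rˣ}
    (hu : IsSelfAdjoint (u : R)) : IsSelfAdjoint (↑u⁻¹ : R) :=
  congrArg Units.val (IsSelfAdjoint.inv (Units.ext hu.star_eq : IsSelfAdjoint u))

theorem Units.ring_inverse_mul_self {M : Type*} [MonoidWithZero M] (u : Mˣ) :
    Ring.inverse (u * u : M) = ↑u⁻¹ * ↑u⁻¹ := by
  rw [← Units.val_mul, Ring.inverse_unit, mul_inv_rev, Units.val_mul]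

theorem le_of_mul_self_le_mul_self {A : Type*} [CStarAlgebra A] [PartialOrder A]
    [StarOrderedRing A] {x y : A} (hx : 0 ≤ x) (hy : 0 ≤ y) (h : x * x ≤ y * y) : x ≤ y := by
  simpa only [CFC.sqrt_mul_self x hx, CFC.sqrt_mul_self y hy] using CFC.sqrt_le_sqrt _ _ h

section Range

variable {R E : Type*} [Semiring R] [TopologicalSpace E] [AddCommMonoid E] [Module R E]

theorem ContinuousLinearMap.range_mul_le_left (f g : E →L[R] E) :
    LinearMap.range ((f * g : E →L[R] E) : E →ₗ[R] E) ≤ LinearMap.range (f : E →ₗ[R] E) := by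
  rw [toLinearMap_mul, Module.End.mul_eq_comp]
  exact LinearMap.range_comp_le_range _ _

theorem ContinuousLinearMap.range_mul_le_range_mul (f : E →L[R] E) {g h : E →L[R] E}
    (hgh : LinearMap.range (g : E →ₗ[R] E) ≤ LinearMap.range (h : E →ₗ[R] E)) :
    LinearMap.range ((f * g : E →L[R] E) : E →ₗ[R] E) ≤
      LinearMap.range ((f * h : E →L[R] E) : E →ₗ[R] E) := by
  simp only [toLinearMap_mul, Module.End.mul_eq_comp, LinearMap.range_comp]
  exact Submodule.map_mono hgh

end Range

theorem range_le_range_of_norm_adjoint_le {𝕜 E F G : Type*} [RCLike 𝕜]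
    [NormedAddCommGroup E] [InnerProductSpace 𝕜 E] [CompleteSpace E]
    [NormedAddCommGroup F] [InnerProductSpace 𝕜 F] [CompleteSpace F]
    [NormedAddCommGroup G] [InnerProductSpace 𝕜 G] [CompleteSpace G]
    {A : E →L[𝕜] F} {B : G →L[𝕜] F} {M : ℝ}
    (h : ∀ u, ‖adjoint A u‖ ≤ M * ‖adjoint B u‖) :
    LinearMap.range (A : E →ₗ[𝕜] F) ≤ LinearMap.range (B : G →ₗ[𝕜] F) := by
  rintro _ ⟨x, rfl⟩
  set T : F →ₗ[𝕜] G := (adjoint B).toLinearMap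
  have hbound : ∀ u, ‖inner 𝕜 (A x) u‖ ≤ (M * ‖x‖) * ‖T u‖ := fun u =>
    calc ‖inner 𝕜 (A x) u‖ = ‖inner 𝕜 x (adjoint A u)‖ := by rw [adjoint_inner_right]
    _ ≤ ‖x‖ * ‖adjoint A u‖ := norm_inner_le_norm _ _
    _ ≤ ‖x‖ * (M * ‖adjoint B u‖) := mul_le_mul_of_nonneg_left (h u) (norm_nonneg x)
    _ = (M * ‖x‖) * ‖T u‖ := by simp only [T, coe_coe]; ring
  -- `⟪A x, ·⟫` factors through `T` and is bounded on its range; extend it by Hahn–Banach.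
  have hker : LinearMap.ker T ≤ LinearMap.ker (innerSL 𝕜 (A x)).toLinearMap := by
    intro u hu
    have h0 := hbound u
    rw [LinearMap.mem_ker.mp hu, norm_zero, mul_zero] at h0
    simpa using norm_le_zero_iff.mp h0
  set g₀ : LinearMap.range T →ₗ[𝕜] 𝕜 :=
    ((LinearMap.ker T).liftQ (innerSL 𝕜 (A x)).toLinearMap hker).comp
      T.quotKerEquivRange.symm.toLinearMap
  have hg₀ : ∀ u, g₀ ⟨T u, LinearMap.mem_range_self T u⟩ = inner 𝕜 (A x) u := by
    intro u
    simp [g₀, LinearMap.quotKerEquivRange_symm_apply_image]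
  have hg₀_bound : ∀ v : LinearMap.range T, ‖g₀ v‖ ≤ (M * ‖x‖) * ‖v‖ := by
    rintro ⟨_, u, rfl⟩
    simpa [hg₀ u] using hbound u
  obtain ⟨g, hg, -⟩ := exists_extension_norm_eq (LinearMap.range T) (g₀.mkContinuous _ hg₀_bound)
  refine ⟨(InnerProductSpace.toDual 𝕜 G).symm g, ext_inner_right 𝕜 fun u => ?_⟩
  calc inner 𝕜 (B ((InnerProductSpace.toDual 𝕜 G).symm g)) u
      = g (adjoint B u) := by rw [← adjoint_inner_right, InnerProductSpace.toDual_symm_apply]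
  _ = inner 𝕜 (A x) u := by
    rw [← hg₀ u, ← LinearMap.mkContinuous_apply g₀ _ hg₀_bound]
    exact hg ⟨T u, LinearMap.mem_range_self T u⟩

lemma re_inner_star_mul_self_apply (A : H →L[ℂ] H) (u : H) :
    RCLike.re (inner ℂ ((star A * A) u) u) = ‖A u‖ ^ 2 := by
  rw [apply_norm_sq_eq_inner_adjoint_left, star_eq_adjoint]; rfl

theorem star_mul_self_le_star_mul_self_iff {A B : H →L[ℂ] H} :
    star A * A ≤ star B * B ↔ ∀ u, ‖A u‖ ≤ ‖B u‖ := by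
  rw [le_def, isPositive_def']
  simp only [(IsSelfAdjoint.star_mul_self B).sub (IsSelfAdjoint.star_mul_self A), true_and,
    reApplyInnerSelf, sub_apply, inner_sub_left, map_sub, re_inner_star_mul_self_apply, sub_nonneg]
  exact forall_congr' fun u => sq_le_sq₀ (norm_nonneg _) (norm_nonneg _)

theorem ContinuousLinearMap.IsPositive.apply_eq_zero_of_inner_apply_self_eq_zero
    {T : H →L[ℂ] H} (hT : T.IsPositive) {x : H} (hx : inner ℂ (T x) x = 0) : T x = 0 := by
  have hT0 : 0 ≤ T := (nonneg_iff_isPositive T).mpr hT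
  set ρ := CFC.sqrt T
  have hρ : star ρ * ρ = T := by
    rw [(IsSelfAdjoint.of_nonneg (CFC.sqrt_nonneg T)).star_eq, CFC.sqrt_mul_sqrt_self T hT0]
  have hρx : ‖ρ x‖ ^ 2 = 0 := by rw [← re_inner_star_mul_self_apply, hρ, hx, map_zero]
  rw [← hρ, mul_apply_eq_comp, norm_eq_zero.mp (pow_eq_zero_iff two_ne_zero |>.mp hρx), map_zero]

theorem exists_unit_isSelfAdjoint_mul_self_eq {α : H →L[ℂ] H} (hα : α.IsPositive)
    (hαu : IsUnit α) :
    ∃ u : (H →L[ℂ] H)ˣ, IsSelfAdjoint (u : H →L[ℂ] H) ∧ (u * u : H →L[ℂ] H) = α := by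
  have hα0 : 0 ≤ α := (nonneg_iff_isPositive α).mpr hα
  have hu : IsUnit (CFC.sqrt α) := (CFC.isUnit_sqrt_iff α hα0).mpr hαu
  exact ⟨hu.unit, IsSelfAdjoint.of_nonneg (CFC.sqrt_nonneg α), CFC.sqrt_mul_sqrt_self α hα0⟩

theorem projL_eq_starProjection {E : Type*} [NormedAddCommGroup E] [InnerProductSpace ℂ E]
    (S : Submodule ℂ E) [S.HasOrthogonalProjection] :
    projL S = S.starProjection :=
  rfl

theorem ContinuousLinearMap.mul_starProjection_of_orthogonal_le_ker {𝕜 E : Type*} [RCLike 𝕜]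
    [NormedAddCommGroup E] [InnerProductSpace 𝕜 E] {T : E →L[𝕜] E} {S : Submodule 𝕜 E}
    [S.HasOrthogonalProjection] (h : Sᗮ ≤ LinearMap.ker (T : E →ₗ[𝕜] E)) :
    T * S.starProjection = T := by
  ext x
  have hx : T (x - S.starProjection x) = 0 := h (S.sub_starProjection_mem_orthogonal x)
  rwa [map_sub, sub_eq_zero, eq_comm] at hx

namespace IsSqrtAbs

variable {a m : H →L[ℂ] H}

theorem isSelfAdjoint (h : IsSqrtAbs a m) : IsSelfAdjoint m :=
  h.1.isSelfAdjoint

theorem star_mul_self_sq (h : IsSqrtAbs a m) : star (m * m) * (m * m) = star a * a := by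
  rw [star_mul, h.isSelfAdjoint.star_eq, star_eq_adjoint a, ← h.2]
  noncomm_ring

theorem norm_mul_self_apply (h : IsSqrtAbs a m) (u : H) : ‖(m * m) u‖ = ‖a u‖ :=
  le_antisymm (star_mul_self_le_star_mul_self_iff.mp h.star_mul_self_sq.le u)
    (star_mul_self_le_star_mul_self_iff.mp h.star_mul_self_sq.ge u)

theorem range_le (h : IsSqrtAbs a m) (ha : IsSelfAdjoint a) :
    LinearMap.range (a : H →ₗ[ℂ] H) ≤ LinearMap.range (m : H →ₗ[ℂ] H) := by
  refine le_trans ?_ (range_mul_le_left m m)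
  refine range_le_range_of_norm_adjoint_le (M := 1) fun u => ?_
  rw [ha.adjoint_eq, one_mul, ← star_eq_adjoint, star_mul, h.isSelfAdjoint.star_eq,
    h.norm_mul_self_apply]

theorem range_projL_mul_le {B : H →L[ℂ] H} {S : Submodule ℂ H}
    [S.HasOrthogonalProjection] (hB : IsSelfAdjoint B) (hm : IsSqrtAbs (blockA B S) m)
    (hb : LinearMap.range (blockB B S : H →ₗ[ℂ] H) ≤ LinearMap.range (m : H →ₗ[ℂ] H)) :
    LinearMap.range ((projL S * B : H →L[ℂ] H) : H →ₗ[ℂ] H) ≤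
      LinearMap.range (m : H →ₗ[ℂ] H) := by
  have hsplit : projL S * B = blockA B S + blockB B S := by
    simp only [blockA, blockB]; noncomm_ring
  have ha : IsSelfAdjoint (blockA B S) := by
    rw [blockA, projL_eq_starProjection]
    simpa only [(isSelfAdjoint_starProjection S).star_eq] using hB.conjugate S.starProjection
  rw [hsplit, toLinearMap_add]
  exact (LinearMap.range_add_le _ _).trans (sup_le (hm.range_le ha) hb)

theorem range_mul_le_of_isSqrtAbs_conj {C m₀ mh : H →L[ℂ] H} {c : ℝ}
    (hm₀ : IsSqrtAbs a m₀) (hmh : IsSqrtAbs (C * a * adjoint C) mh)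
    (hC : ∀ v, ‖a v‖ ≤ c * ‖C (a v)‖) :
    LinearMap.range ((C * m₀ : H →L[ℂ] H) : H →ₗ[ℂ] H) ≤ LinearMap.range (mh : H →ₗ[ℂ] H) := by
  set μ := ‖C‖ * |c|
  set Y : H →L[ℂ] H := (√μ : ℂ) • mh
  have hY : IsSelfAdjoint Y := by
    rw [IsSelfAdjoint, star_smul, hmh.isSelfAdjoint.star_eq, Complex.star_def, Complex.conj_ofReal]
  have hYu : ∀ u, ‖Y u‖ = √μ * ‖mh u‖ := fun u => by
    rw [smul_apply, norm_smul, Complex.norm_of_nonneg (Real.sqrt_nonneg _)]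
  have hYY : ∀ u, ‖(star Y * Y) u‖ = μ * ‖(mh * mh) u‖ := fun u => by
    rw [hY.star_eq, smul_mul_smul_comm, smul_apply, norm_smul, ← Complex.ofReal_mul,
      Real.mul_self_sqrt (by positivity), Complex.norm_of_nonneg (by positivity)]
  -- `X = C m₀² C*` is dominated by `μ |C a C*| = Y²`, and square roots are operator monotone.
  set X := star (m₀ * adjoint C) * (m₀ * adjoint C)
  have hX : ∀ u, ‖X u‖ ≤ ‖(star Y * Y) u‖ := fun u => by
    have hXu : X u = C ((m₀ * m₀) (adjoint C u)) := by
      simp only [X, star_mul, hm₀.isSelfAdjoint.star_eq, star_eq_adjoint, adjoint_adjoint]; rfl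
    calc ‖X u‖ ≤ ‖C‖ * ‖(m₀ * m₀) (adjoint C u)‖ := hXu ▸ C.le_opNorm _
    _ = ‖C‖ * ‖a (adjoint C u)‖ := by rw [hm₀.norm_mul_self_apply]
    _ ≤ ‖C‖ * (|c| * ‖C (a (adjoint C u))‖) := by
      gcongr
      exact (hC _).trans (mul_le_mul_of_nonneg_right (le_abs_self c) (norm_nonneg _))
    _ = μ * ‖(mh * mh) u‖ := by rw [hmh.norm_mul_self_apply, ← mul_assoc]; rfl
    _ = ‖(star Y * Y) u‖ := (hYY u).symm
  have hXY : X ≤ star Y * Y := by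
    refine le_of_mul_self_le_mul_self (star_mul_self_nonneg _) (star_mul_self_nonneg _) ?_
    have hXX := star_mul_self_le_star_mul_self_iff.mpr hX
    rwa [(IsSelfAdjoint.star_mul_self (m₀ * adjoint C)).star_eq,
      (IsSelfAdjoint.star_mul_self Y).star_eq] at hXX
  refine range_le_range_of_norm_adjoint_le (M := √μ) fun u => ?_
  rw [hmh.isSelfAdjoint.adjoint_eq, ← hYu, ← star_eq_adjoint, star_mul,
    hm₀.isSelfAdjoint.star_eq, star_eq_adjoint]
  exact star_mul_self_le_star_mul_self_iff.mp hXY u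

end IsSqrtAbs

namespace Submodule

variable {α : H →L[ℂ] H} {S : Submodule ℂ H}

theorem inf_map_orthogonal_eq_bot (hα : α.IsPositive) : S ⊓ Sᗮ.map (α : H →ₗ[ℂ] H) = ⊥ := by
  refine eq_bot_iff.mpr ?_
  rintro _ ⟨hxS, t, htS, rfl⟩
  exact (mem_bot ℂ).mpr
    (hα.apply_eq_zero_of_inner_apply_self_eq_zero ((S.mem_orthogonal t).mp htS _ hxS))

-- With `α = ρ²`, the decomposition is the image under `ρ` of `H = K ⊕ Kᗮ`, where `K = ρ⁻¹ S`.
theorem sup_map_orthogonal_eq_top (hα : α.IsPositive) (hαu : IsUnit α) [CompleteSpace S] :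
    S ⊔ Sᗮ.map (α : H →ₗ[ℂ] H) = ⊤ := by
  obtain ⟨u, hu, rfl⟩ := exists_unit_isSelfAdjoint_mul_self_eq hα hαu
  have hinv : ∀ v, (u : H →L[ℂ] H) ((↑u⁻¹ : H →L[ℂ] H) v) = v := fun v => by
    rw [← mul_apply_eq_comp, Units.mul_inv, one_apply_eq_self]
  set K := S.comap (u : H →ₗ[ℂ] H)
  have : CompleteSpace K :=
    ((completeSpace_coe_iff_isComplete.mp ‹CompleteSpace S›).isClosed.preimage
      (u : H →L[ℂ] H).continuous).completeSpace_coe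
  refine eq_top_iff.mpr fun x _ => ?_
  obtain ⟨y, hy, z, hz, hyz⟩ := mem_sup.mp
    (K.sup_orthogonal_of_hasOrthogonalProjection ▸ mem_top (x := (↑u⁻¹ : H →L[ℂ] H) x))
  refine mem_sup.mpr
    ⟨(u : H →L[ℂ] H) y, hy, (u : H →L[ℂ] H) z, ⟨(↑u⁻¹ : H →L[ℂ] H) z, ?_, ?_⟩, ?_⟩
  · refine (S.mem_orthogonal _).mpr fun s hs => ?_
    rw [← hu.val_inv.adjoint_eq, adjoint_inner_right]
    exact (K.mem_orthogonal z).mp hz _ (by simpa [K, hinv] using hs)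
  · change ((u : H →L[ℂ] H) * u) _ = _
    rw [mul_apply_eq_comp, hinv]
  · rw [← map_add, hyz, hinv]

end Submodule

namespace IsIdempotentElem

variable {α P : H →L[ℂ] H} {S : Submodule ℂ H}

-- `P` is the `⟪α⁻¹ ·, ·⟫`-orthogonal projection onto `S`, so `P α` is selfadjoint.
theorem isSelfAdjoint_mul_of_ker_le (hP : IsIdempotentElem P) (hα : IsSelfAdjoint α)
    (hPr : LinearMap.range (P : H →ₗ[ℂ] H) ≤ S)
    (hPk : LinearMap.ker (P : H →ₗ[ℂ] H) ≤ Sᗮ.map (α : H →ₗ[ℂ] H)) : IsSelfAdjoint (P * α) := by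
  have hS : ∀ x, P x ∈ S := fun x => hPr (LinearMap.mem_range_self _ x)
  have hdec : ∀ x, ∃ t ∈ Sᗮ, α t = α x - P (α x) := fun x =>
    hPk (by simp [LinearMap.mem_ker, ← mul_apply_eq_comp P P, hP.eq])
  choose t ht hαt using hdec
  have hPα : ∀ x, P (α x) = α (x - t x) := fun x => by rw [map_sub, hαt, sub_sub_cancel]
  have hcut : ∀ x y, inner ℂ (P (α x)) y = inner ℂ (P (α x)) (y - t y) := fun x y => by
    rw [inner_sub_right, (S.mem_orthogonal _).mp (ht y) _ (hS _), sub_zero]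
  refine isSelfAdjoint_iff_isSymmetric.mpr fun x y => ?_
  change inner ℂ (P (α x)) y = inner ℂ x (P (α y))
  rw [← inner_conj_symm x, hcut, hcut y, hPα, hPα, inner_conj_symm]
  exact hα.isSymmetric _ _

end IsIdempotentElem

section UnitConj

variable {u : (H →L[ℂ] H)ˣ}

theorem isSqrtAbs_units_conj (hu : IsSelfAdjoint (u : H →L[ℂ] H)) {a m : H →L[ℂ] H}
    (hm : (Ring.inverse (u * u : H →L[ℂ] H) * m).IsPositive)
    (hm4 : m ^ 4 = u * u * adjoint a * Ring.inverse (u * u : H →L[ℂ] H) * a) :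
    IsSqrtAbs ((↑u⁻¹ : H →L[ℂ] H) * a * (u : H →L[ℂ] H))
      ((↑u⁻¹ : H →L[ℂ] H) * m * (u : H →L[ℂ] H)) := by
  rw [u.ring_inverse_mul_self] at hm hm4
  constructor
  · have h := hm.conj_adjoint (u : H →L[ℂ] H)
    rwa [hu.adjoint_eq, ← mul_def, ← mul_def, ← mul_assoc, mul_assoc _ (↑u⁻¹ : H →L[ℂ] H),
      Units.mul_inv_cancel_left] at h
  · simp only [Units.conj_pow', hm4, ← star_eq_adjoint, star_mul, hu.star_eq,
      hu.val_inv.star_eq]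
    simp only [mul_assoc, Units.inv_mul_cancel_left]

theorem norm_le_of_isSelfAdjoint_mul (hu : IsSelfAdjoint (u : H →L[ℂ] H)) {P : H →L[ℂ] H}
    (hPα : IsSelfAdjoint (P * (u * u))) {s : H} (hs : P s = s) :
    ‖s‖ ≤ ‖(↑u⁻¹ : H →L[ℂ] H)‖ * ‖(↑u⁻¹ * (P * (u * u)) : H →L[ℂ] H) s‖ := by
  set ι : H →L[ℂ] H := ↑u⁻¹
  set C : H →L[ℂ] H := ι * (P * (u * u))
  have hCs : inner ℂ (C s) (ι s) = inner ℂ s s := by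
    have hαι : (P * (u * u)) (ι (ι s)) = P s := by
      simp only [ι, ← mul_apply_eq_comp, mul_assoc, Units.mul_inv_cancel_left, Units.mul_inv,
        mul_one]
    calc inner ℂ (ι ((P * (u * u)) s)) (ι s) = inner ℂ ((P * (u * u)) s) (ι (ι s)) :=
          hu.val_inv.isSymmetric _ _
    _ = inner ℂ s ((P * (u * u)) (ι (ι s))) := hPα.isSymmetric _ _
    _ = inner ℂ s s := by rw [hαι, hs]
  have h : ‖s‖ * ‖s‖ ≤ (‖ι‖ * ‖C s‖) * ‖s‖ :=
    calc ‖s‖ * ‖s‖ = RCLike.re (inner ℂ (C s) (ι s)) := by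
          rw [hCs, inner_self_eq_norm_mul_norm]
    _ ≤ ‖C s‖ * ‖ι s‖ := (RCLike.re_le_norm _).trans (norm_inner_le_norm _ _)
    _ ≤ ‖C s‖ * (‖ι‖ * ‖s‖) := by gcongr; exact ι.le_opNorm s
    _ = (‖ι‖ * ‖C s‖) * ‖s‖ := by ring
  rcases (norm_nonneg s).eq_or_lt with hs0 | hs0
  · rw [← hs0]; positivity
  · exact le_of_mul_le_mul_right h hs0

theorem inv_mul_mul_blockA_mul_adjoint_eq (hu : IsSelfAdjoint (u : H →L[ℂ] H)) {P B : H →L[ℂ] H}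
    {S : Submodule ℂ H} [S.HasOrthogonalProjection] (hPα : IsSelfAdjoint (P * (u * u)))
    (hPαp : P * (u * u) * projL S = P * (u * u)) :
    (↑u⁻¹ * (P * (u * u)) * blockA B S * adjoint (↑u⁻¹ * (P * (u * u)) : H →L[ℂ] H) :
      H →L[ℂ] H) =
      ↑u⁻¹ * (P * (u * u * B) * P) * u := by
  have hp : star (projL S) = projL S := isSelfAdjoint_starProjection S
  have hpPα : projL S * (P * (u * u)) = P * (u * u) := by
    rw [← hp, ← hPα.star_eq, ← star_mul, hPαp]
  rw [← star_eq_adjoint, star_mul, hPα.star_eq, hu.val_inv.star_eq, blockA]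
  calc (↑u⁻¹ * (P * (u * u)) * (projL S * B * projL S) * (P * (u * u) * ↑u⁻¹) : H →L[ℂ] H)
      = ↑u⁻¹ * (P * (u * u) * projL S) * B * (projL S * (P * (u * u))) * ↑u⁻¹ := by
        simp only [mul_assoc]
    _ = ↑u⁻¹ * (P * (u * u * B) * P) * u := by
        rw [hPαp, hpPα]
        simp only [mul_assoc, Units.mul_inv, mul_one]

end UnitConj

theorem stmt_13_general (J α W : H →L[ℂ] H)
    (hα : α.IsPositive) (hαu : IsUnit α)
    (hW : IsSelfAdjoint (J * W))
    (S : Submodule ℂ H) [CompleteSpace S]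
    (hwc : IsWeaklyComplementable (J * W) S) :
    (S ⊓ Sᗮ.map (α : H →ₗ[ℂ] H) = ⊥ ∧ S ⊔ Sᗮ.map (α : H →ₗ[ℂ] H) = ⊤) ∧
    ∀ P : H →L[ℂ] H, P * P = P → LinearMap.range (P : H →ₗ[ℂ] H) = S → LinearMap.ker (P : H →ₗ[ℂ] H) = Sᗮ.map (α : H →ₗ[ℂ] H) →
      ∀ m : H →L[ℂ] H, (Ring.inverse α * m).IsPositive →
        m ^ 4 = α * adjoint (P * (α * J * W) * P) * Ring.inverse α * (P * (α * J * W) * P) →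
        LinearMap.range ((P * (α * J * W) * (1 - P) : H →L[ℂ] H) : H →ₗ[ℂ] H) ≤ LinearMap.range (m : H →ₗ[ℂ] H) := by
  refine ⟨⟨S.inf_map_orthogonal_eq_bot hα, S.sup_map_orthogonal_eq_top hα hαu⟩, ?_⟩
  intro P hP hPr hPk m hm hm4
  obtain ⟨m₀, hm₀, hb⟩ := hwc
  have hPα := IsIdempotentElem.isSelfAdjoint_mul_of_ker_le hP hα.isSelfAdjoint hPr.le hPk.le
  have hPαp : P * α * projL S = P * α :=
    mul_starProjection_of_orthogonal_le_ker fun x hx => hPk.ge ⟨x, hx, rfl⟩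
  have hPS : ∀ s ∈ S, P s = s := fun s hs => by
    obtain ⟨w, rfl⟩ := hPr.ge hs
    exact DFunLike.congr_fun hP w
  obtain ⟨u, hu, rfl⟩ := exists_unit_isSelfAdjoint_mul_self_eq hα hαu
  set ρ : H →L[ℂ] H := (u : H →L[ℂ] H)
  set ι : H →L[ℂ] H := ↑u⁻¹
  set C := ι * (P * (ρ * ρ))
  have hmh : IsSqrtAbs (C * blockA (J * W) S * adjoint C) (ι * m * ρ) := by
    rw [inv_mul_mul_blockA_mul_adjoint_eq hu hPα hPαp, ← mul_assoc (ρ * ρ) J W]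
    exact isSqrtAbs_units_conj hu hm hm4
  have hC : ∀ v, ‖blockA (J * W) S v‖ ≤ ‖ι‖ * ‖C (blockA (J * W) S v)‖ := fun v =>
    norm_le_of_isSelfAdjoint_mul hu hPα (hPS _ (S.starProjection_apply_mem _))
  have hCm₀ := hm₀.range_mul_le_of_isSqrtAbs_conj hmh hC
  have hb' : P * (ρ * ρ * J * W) * (1 - P) = ρ * C * (projL S * (J * W)) * (1 - P) := by
    rw [← mul_assoc (ρ * C), mul_assoc ρ C, mul_assoc ι, hPαp]
    simp only [ρ, ι, mul_assoc, Units.mul_inv_cancel_left]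
  calc LinearMap.range ((P * (ρ * ρ * J * W) * (1 - P) : H →L[ℂ] H) : H →ₗ[ℂ] H)
      ≤ LinearMap.range ((ρ * C * (projL S * (J * W)) : H →L[ℂ] H) : H →ₗ[ℂ] H) :=
        hb' ▸ range_mul_le_left _ _
    _ ≤ LinearMap.range ((ρ * C * m₀ : H →L[ℂ] H) : H →ₗ[ℂ] H) :=
        range_mul_le_range_mul _ (hm₀.range_projL_mul_le hW hb)
    _ ≤ LinearMap.range ((ρ * (ι * m * ρ) : H →L[ℂ] H) : H →ₗ[ℂ] H) := by
        rw [mul_assoc]; exact range_mul_le_range_mul _ hCm₀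
    _ ≤ LinearMap.range (m : H →ₗ[ℂ] H) := by
        rw [← mul_assoc, ← mul_assoc, Units.mul_inv, one_mul]; exact range_mul_le_left _ _

/-- Weak complementability does not depend on the signature operator: if `JW` is `S`-weakly
complementable, then `αJW` is `S`-weakly complementable with respect to the inner product
`⟨x,y⟩_α = ⟨α⁻¹x, y⟩` induced by the signature operator `J_α = αJ`. -/
theorem stmt_13 (J α W : H →L[ℂ] H)
    (hJ : IsSelfAdjoint J) (hJ2 : J * J = 1)
    (hα : α.IsPositive) (hαu : IsUnit α) (hαJ : (α * J) * (α * J) = 1)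
    (hW : IsSelfAdjoint (J * W))
    (S : Submodule ℂ H) [CompleteSpace S]
    (hwc : IsWeaklyComplementable (J * W) S) :
    (S ⊓ Sᗮ.map (α : H →ₗ[ℂ] H) = ⊥ ∧ S ⊔ Sᗮ.map (α : H →ₗ[ℂ] H) = ⊤) ∧
    ∀ P : H →L[ℂ] H, P * P = P → LinearMap.range (P : H →ₗ[ℂ] H) = S → LinearMap.ker (P : H →ₗ[ℂ] H) = Sᗮ.map (α : H →ₗ[ℂ] H) →
      ∀ m : H →L[ℂ] H, (Ring.inverse α * m).IsPositive →
        m ^ 4 = α * adjoint (P * (α * J * W) * P) * Ring.inverse α * (P * (α * J * W) * P) →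
        LinearMap.range ((P * (α * J * W) * (1 - P) : H →L[ℂ] H) : H →ₗ[ℂ] H) ≤ LinearMap.range (m : H →ₗ[ℂ] H) :=
  stmt_13_general J α W hα hαu hW S hwc
end
end

section
/- Let H be a complex Hilbert space, J a signature operator (J* = J, J² = I), W ∈ L(H) Krein-selfadjoint ((JW)* = JW), and S a closed subspace of H. Then the following are equivalent: (i) S is W-nonnegative in the Krein sense (⟨JWs, s⟩ ≥ 0 for all s ∈ S) and JW is S-weakly complementable; (ii) the set N^−(W, S^{[⊥]}) := {X ∈ L(H) : (JX)* = JX, X ≼ W, range(X) ⊆ J(S^⊥)} has a maximum element with respect to the Krein order ≼. In this case this maximum equals W_{/[S]} := J·(JW)_{/S}. -/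
open ContinuousLinearMap

noncomputable section

variable {H : Type*} [NormedAddCommGroup H] [InnerProductSpace ℂ H] [CompleteSpace H]

/-!
Multiplying by `J` maps `N⁻(W, J Sᗮ)` bijectively onto `M⁻(B, Sᗮ) = {X = X⋆ : X ≤ B, range X ⊆ Sᗮ}`
with `B = JW`, and turns the Krein order into the Loewner order, so everything is about the
block matrix `B = [[a, b], [b⋆, c]]`.

If `a ≥ 0` and `b = a^{1/2} f` with `f` reduced, then `B - (c - f⋆f) = (a^{1/2} + f)⋆(a^{1/2} + f)`,
so `c - f⋆f ∈ M⁻(B, Sᗮ)`; it dominates every `X ∈ M⁻(B, Sᗮ)` because testing `B - X ≥ 0` at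
`s + y` with `s ∈ S` and letting `a^{1/2} s → -f y` leaves `⟨(c - f⋆f - X) y, y⟩ ≥ 0`.
Conversely, for `X ∈ M⁻(B, Sᗮ)` the operator `B - X ≥ 0` has the same blocks `a` and `b` as `B`,
which forces `a ≥ 0` and, by Douglas' factorization lemma, `range b ⊆ range a^{1/2}`. Finally the
polar factor `u` fixes the closure of `range a`, which contains `range f`, so `B_{/S} = c - f⋆f`.
-/

theorem ContinuousLinearMap.injOn_orthogonal_ker {E F : Type*} [NormedAddCommGroup E]
    [InnerProductSpace ℂ E] [NormedAddCommGroup F] [NormedSpace ℂ F] (m : E →L[ℂ] F) :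
    Set.InjOn m m.kerᗮ := by
  intro x hx y hy hxy
  rw [← sub_eq_zero]
  refine Submodule.disjoint_def.mp m.ker.orthogonal_disjoint _ ?_ (Submodule.sub_mem _ hx hy)
  rw [LinearMap.mem_ker, map_sub, coe_coe, hxy, sub_self]

theorem ContinuousLinearMap.eq_of_mul_eq_mul {E : Type*} [NormedAddCommGroup E]
    [InnerProductSpace ℂ E] {m f g : E →L[ℂ] E} (h : m * f = m * g) (hf : f.range ≤ m.kerᗮ)
    (hg : g.range ≤ m.kerᗮ) : f = g :=
  ext fun x => m.injOn_orthogonal_ker (hf ⟨x, rfl⟩) (hg ⟨x, rfl⟩) congr($h x)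

/-- The reduced solution of `m * f = b`; it is bounded by the closed graph theorem. -/
theorem ContinuousLinearMap.exists_mul_eq_of_range_le {m b : H →L[ℂ] H} (hb : b.range ≤ m.range) :
    ∃ f : H →L[ℂ] H, m * f = b ∧ f.range ≤ m.kerᗮ := by
  let g : H →ₗ[ℂ] H := m.kerᗮ.subtype ∘ₗ
    (Submodule.quotientEquivOfIsCompl _ _ m.ker.isCompl_orthogonal).toLinearMap ∘ₗ
    (m : H →ₗ[ℂ] H).quotKerEquivRange.symm.toLinearMap ∘ₗ
    (b : H →ₗ[ℂ] H).codRestrict m.range fun x => hb ⟨x, rfl⟩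
  have hg : ∀ x, m (g x) = b x := by
    intro x
    set y := (m : H →ₗ[ℂ] H).quotKerEquivRange.symm ⟨b x, hb ⟨x, rfl⟩⟩
    have hy : Submodule.Quotient.mk (g x) = y :=
      (Submodule.quotientEquivOfIsCompl _ _ m.ker.isCompl_orthogonal).symm_apply_apply y
    have := congr(((m : H →ₗ[ℂ] H).quotKerEquivRange $hy : H))
    simpa [y] using this
  have hgK : ∀ x, g x ∈ m.kerᗮ := fun x => Submodule.coe_mem _
  have hcont : Continuous g := by
    refine g.continuous_of_seq_closed_graph fun u x y hu hgu => ?_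
    have hy : y ∈ m.kerᗮ :=
      m.ker.isClosed_orthogonal.mem_of_tendsto hgu (Filter.Eventually.of_forall fun n => hgK (u n))
    refine m.injOn_orthogonal_ker hy (hgK x) ?_
    rw [hg]
    refine tendsto_nhds_unique ((m.continuous.tendsto y).comp hgu) ?_
    simpa only [Function.comp_def, hg] using (b.continuous.tendsto x).comp hu
  exact ⟨⟨g, hcont⟩, ext hg, by rintro _ ⟨x, rfl⟩; exact hgK x⟩

theorem IsSelfAdjoint.orthogonal_ker {m : H →L[ℂ] H} (hm : IsSelfAdjoint m) :
    m.kerᗮ = m.range.topologicalClosure := by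
  rw [ContinuousLinearMap.orthogonal_ker, hm.adjoint_eq]

/-- Douglas' factorization lemma. -/
theorem ContinuousLinearMap.exists_comp_eq_of_norm_apply_le {E F G : Type*}
    [NormedAddCommGroup E] [NormedSpace ℂ E] [NormedAddCommGroup F] [InnerProductSpace ℂ F]
    [CompleteSpace F] [NormedAddCommGroup G] [NormedSpace ℂ G] [CompleteSpace G]
    (A : E →L[ℂ] G) (m : E →L[ℂ] F) (h : ∀ x, ‖A x‖ ≤ ‖m x‖) :
    ∃ C : F →L[ℂ] G, C ∘L m = A := by
  set K := m.range.topologicalClosure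
  let e : E →ₗ[ℂ] K := (m : E →ₗ[ℂ] F).codRestrict K fun x => m.range.le_topologicalClosure ⟨x, rfl⟩
  have he : DenseRange e := by
    rw [DenseRange, Subtype.dense_iff, ← Set.range_comp]
    exact (Submodule.topologicalClosure_coe _).le
  have hA : ∀ x, ‖A x‖ ≤ 1 * ‖e x‖ := fun x => (one_mul ‖m x‖).symm ▸ h x
  refine ⟨((A : E →ₗ[ℂ] G).extendOfNorm e).comp K.orthogonalProjectionOnto, ext fun x => ?_⟩
  have hx : K.orthogonalProjectionOnto (m x) = e x :=
    K.orthogonalProjectionOnto_mem_subspace_eq_self (e x)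
  simp only [comp_apply, hx, LinearMap.extendOfNorm_eq he ⟨1, hA⟩, coe_coe]

theorem ContinuousLinearMap.mul_eq_self_of_range_le {E : Type*} [NormedAddCommGroup E]
    [NormedSpace ℂ E] {u T g : E →L[ℂ] E} (hu : u * T = T)
    (hg : g.range ≤ T.range.topologicalClosure) : u * g = g := by
  have hfix : T.range.topologicalClosure ≤ (u - 1).ker := by
    refine Submodule.topologicalClosure_minimal _ ?_ (u - 1).isClosed_ker
    rintro _ ⟨x, rfl⟩
    rw [LinearMap.mem_ker, coe_coe, sub_apply, one_apply_eq_self, sub_eq_zero]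
    exact congr($hu x)
  ext x
  have hx := hfix (hg ⟨x, rfl⟩)
  rwa [LinearMap.mem_ker, coe_coe, sub_apply, one_apply_eq_self, sub_eq_zero] at hx

theorem IsMaxOf.unique {E : Type*} [NormedAddCommGroup E] [InnerProductSpace ℂ E]
    {M : Set (E →L[ℂ] E)} {Y Y' : E →L[ℂ] E} (hY : IsMaxOf M Y) (hY' : IsMaxOf M Y') : Y = Y' :=
  le_antisymm ((le_def _ _).mpr (hY'.2 Y hY.1)) ((le_def _ _).mpr (hY.2 Y' hY'.1))

section Sqrt

variable {a : H →L[ℂ] H}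

theorem ContinuousLinearMap.IsPositive.sqrt_mul_sqrt (ha : a.IsPositive) :
    CFC.sqrt a * CFC.sqrt a = a :=
  CFC.sqrt_mul_sqrt_self a ((nonneg_iff_isPositive a).mpr ha)

theorem ContinuousLinearMap.isSelfAdjoint_sqrt (a : H →L[ℂ] H) : IsSelfAdjoint (CFC.sqrt a) :=
  ((nonneg_iff_isPositive _).mp (CFC.sqrt_nonneg a)).isSelfAdjoint

theorem ContinuousLinearMap.IsPositive.norm_sqrt_apply_sq (ha : a.IsPositive) (x : H) :
    ‖CFC.sqrt a x‖ ^ 2 = (inner ℂ (a x) x).re := by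
  rw [apply_norm_sq_eq_inner_adjoint_left, (isSelfAdjoint_sqrt a).adjoint_eq, ← mul_def,
    ha.sqrt_mul_sqrt]
  rfl

theorem ContinuousLinearMap.IsPositive.ker_sqrt (ha : a.IsPositive) : (CFC.sqrt a).ker = a.ker := by
  ext x
  simp only [LinearMap.mem_ker, coe_coe]
  constructor
  · intro hx
    rw [← congr($(ha.sqrt_mul_sqrt) x)]
    change CFC.sqrt a (CFC.sqrt a x) = 0
    rw [hx, map_zero]
  · intro hx
    have h := ha.norm_sqrt_apply_sq x
    rw [hx, inner_zero_left, Complex.zero_re, sq_eq_zero_iff, norm_eq_zero] at h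
    exact h

theorem ContinuousLinearMap.IsPositive.sqrt_mul_eq_of_mul_eq (ha : a.IsPositive) {P : H →L[ℂ] H}
    (haP : a * P = a) : CFC.sqrt a * P = CFC.sqrt a := by
  have hP : CFC.sqrt a * (1 - P) = 0 := by
    ext x
    have hx : (1 - P) x ∈ a.ker := by
      change a (x - P x) = 0
      rw [map_sub, ← mul_apply_eq_comp, haP, sub_self]
    rw [← ha.ker_sqrt] at hx
    exact hx
  rwa [mul_sub, mul_one, sub_eq_zero, eq_comm] at hP

theorem ContinuousLinearMap.IsPositive.closure_range_sqrt (ha : a.IsPositive) :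
    (CFC.sqrt a).range.topologicalClosure = a.range.topologicalClosure := by
  rw [← (isSelfAdjoint_sqrt a).orthogonal_ker, ← ha.isSelfAdjoint.orthogonal_ker, ha.ker_sqrt]

theorem ContinuousLinearMap.IsPositive.isSqrtAbs_sqrt (ha : a.IsPositive) :
    IsSqrtAbs a (CFC.sqrt a) := by
  refine ⟨(nonneg_iff_isPositive _).mp (CFC.sqrt_nonneg a), ?_⟩
  rw [ha.isSelfAdjoint.adjoint_eq]
  conv_rhs => rw [← ha.sqrt_mul_sqrt]
  noncomm_ring

theorem IsSqrtAbs.eq_sqrt {m : H →L[ℂ] H} (hm : IsSqrtAbs a m) (ha : a.IsPositive) :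
    m = CFC.sqrt a := by
  have hm4 : m * m * (m * m) = a * a :=
    calc m * m * (m * m) = m ^ 4 := by noncomm_ring
      _ = a * a := by rw [hm.2, ha.isSelfAdjoint.adjoint_eq]
  have hm2 : m * m = a :=
    (CFC.sqrt_unique hm4 hm.1.isSelfAdjoint.mul_self_nonneg).symm.trans
      (CFC.sqrt_mul_self a ((nonneg_iff_isPositive a).mpr ha))
  exact (CFC.sqrt_unique hm2 ((nonneg_iff_isPositive m).mpr hm.1)).symm

end Sqrt

section Blocks

variable {E : Type*} [NormedAddCommGroup E] [InnerProductSpace ℂ E]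
  {S : Submodule ℂ E} [S.HasOrthogonalProjection] {B : E →L[ℂ] E}

theorem projL_mul_projL : projL S * projL S = projL S := S.isIdempotentElem_starProjection

theorem one_sub_projL_mul_projL : (1 - projL S) * projL S = 0 := by
  rw [sub_mul, one_mul, projL_mul_projL, sub_self]

theorem projL_mul_eq_zero_iff {X : E →L[ℂ] E} : projL S * X = 0 ↔ X.range ≤ Sᗮ := by
  constructor
  · rintro h _ ⟨x, rfl⟩
    exact S.starProjection_apply_eq_zero_iff.mp congr($h x)
  · intro h
    ext x
    exact S.starProjection_apply_eq_zero_iff.mpr (h ⟨x, rfl⟩)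

theorem blockA_mul_projL : blockA B S * projL S = blockA B S := by
  rw [blockA, mul_assoc, projL_mul_projL]

theorem blockB_mul_projL : blockB B S * projL S = 0 := by
  rw [blockB, mul_assoc, one_sub_projL_mul_projL, mul_zero]

theorem blockC_mul_projL : blockC B S * projL S = 0 := by
  rw [blockC, mul_assoc, one_sub_projL_mul_projL, mul_zero]

theorem blockA_sub_of_projL_mul_eq_zero {X : E →L[ℂ] E} (hX : projL S * X = 0) :
    blockA (B - X) S = blockA B S := by
  rw [blockA, blockA, mul_sub (projL S) B X, hX, sub_zero]

theorem blockB_sub_of_projL_mul_eq_zero {X : E →L[ℂ] E} (hX : projL S * X = 0) :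
    blockB (B - X) S = blockB B S := by
  rw [blockB, blockB, mul_sub (projL S) B X, hX, sub_zero]

end Blocks

section SelfAdjointBlocks

variable {S : Submodule ℂ H} [S.HasOrthogonalProjection] {B : H →L[ℂ] H}

theorem isSelfAdjoint_projL : IsSelfAdjoint (projL S) := isSelfAdjoint_starProjection S

theorem isSelfAdjoint_blockA (hB : IsSelfAdjoint B) : IsSelfAdjoint (blockA B S) := by
  simp only [blockA, IsSelfAdjoint, star_mul, isSelfAdjoint_projL.star_eq, hB.star_eq, mul_assoc]

theorem isSelfAdjoint_blockC (hB : IsSelfAdjoint B) : IsSelfAdjoint (blockC B S) := by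
  simp only [blockC, IsSelfAdjoint, star_mul, star_sub, star_one, isSelfAdjoint_projL.star_eq,
    hB.star_eq, mul_assoc]

theorem eq_blockA_add_blockB_add_adjoint_add_blockC (hB : IsSelfAdjoint B) :
    B = blockA B S + blockB B S + adjoint (blockB B S) + blockC B S := by
  rw [← star_eq_adjoint]
  simp only [blockA, blockB, blockC, star_mul, star_sub, star_one, isSelfAdjoint_projL.star_eq,
    hB.star_eq]
  noncomm_ring

end SelfAdjointBlocks

theorem isPositive_of_isPositive_adjoint_mul_add {R T P : H →L[ℂ] H} (hR : IsSelfAdjoint R)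
    (hP : IsSelfAdjoint P) (hRP : R * P = 0) (h : (adjoint T * T + R).IsPositive)
    (hT : T.range ≤ (T * P).range.topologicalClosure) : R.IsPositive := by
  have hPR : P * R = 0 := by
    simpa only [star_mul, hR.star_eq, hP.star_eq, star_zero] using congr_arg star hRP
  refine isPositive_def'.mpr ⟨hR, fun y => ?_⟩
  rw [reApplyInnerSelf_apply]
  -- test `adjoint T * T + R ≥ 0` at `y + P v`, then let `T (P v)` tend to `-T y`
  have key : ∀ v, 0 ≤ ‖T y + (T * P) v‖ ^ 2 + (inner ℂ (R y) y).re := by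
    intro v
    have hv := h.re_inner_nonneg_left (y + P v)
    have hRPv : R (P v) = 0 := congr($hRP v)
    have hRy : inner ℂ (R y) (P v) = 0 := by
      rw [← adjoint_inner_left, hP.adjoint_eq, show P (R y) = 0 from congr($hPR y), inner_zero_left]
    have e : (adjoint T * T + R) (y + P v) = adjoint T (T (y + P v)) + R y := by
      rw [add_apply, map_add R, hRPv, add_zero]
      rfl
    rw [e, inner_add_left, adjoint_inner_left, inner_self_eq_norm_sq_to_K, inner_add_right (R y),
      hRy, add_zero, map_add] at hv
    simpa [← Complex.ofReal_pow] using hv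
  have hmem : -T y ∈ closure ((T * P).range : Set H) := by
    rw [← Submodule.topologicalClosure_coe]
    exact neg_mem (hT ⟨y, rfl⟩)
  have hclosed : IsClosed {z | 0 ≤ ‖T y + z‖ ^ 2 + (inner ℂ (R y) y).re} :=
    isClosed_le continuous_const (by fun_prop)
  simpa using closure_minimal (by rintro _ ⟨v, rfl⟩; exact key v) hclosed hmem

section ShortedOperators

variable {S : Submodule ℂ H} {B X : H →L[ℂ] H}

theorem re_inner_nonneg_of_mem_Mminus (hX : X ∈ Mminus B Sᗮ) (s : H) (hs : s ∈ S) :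
    0 ≤ (inner ℂ (B s) s).re := by
  have hXs : inner ℂ (X s) s = 0 := Submodule.inner_left_of_mem_orthogonal hs (hX.2.2 ⟨s, rfl⟩)
  simpa [inner_sub_left, hXs] using hX.2.1.re_inner_nonneg_left s

variable [S.HasOrthogonalProjection]

theorem mul_projL_of_mem_Mminus (hX : X ∈ Mminus B Sᗮ) : X * projL S = 0 := by
  have h := congr_arg star (projL_mul_eq_zero_iff.mpr hX.2.2)
  rwa [star_mul, hX.1.star_eq, isSelfAdjoint_projL.star_eq, star_zero] at h

theorem isPositive_blockA (hB : IsSelfAdjoint B) (h : ∀ s ∈ S, 0 ≤ (inner ℂ (B s) s).re) :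
    (blockA B S).IsPositive := by
  refine isPositive_def'.mpr ⟨isSelfAdjoint_blockA hB, fun x => ?_⟩
  change 0 ≤ RCLike.re (inner ℂ (S.starProjection (B (S.starProjection x))) x)
  rw [Submodule.inner_starProjection_left_eq_right]
  exact h _ (S.starProjection_apply_mem x)

end ShortedOperators

section RangeInclusion

variable {S : Submodule ℂ H} [S.HasOrthogonalProjection] {B X D : H →L[ℂ] H}

theorem range_blockB_le_range_sqrt_blockA (hD : D.IsPositive) :
    (blockB D S).range ≤ (CFC.sqrt (blockA D S)).range := by
  -- with `r = D^{1/2}`: `a = (r P)⋆ (r P)`, so Douglas' lemma gives `P r = a^{1/2} C⋆`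
  set P := projL S
  set r := CFC.sqrt D
  have hr : IsSelfAdjoint r := isSelfAdjoint_sqrt D
  have hrr : r * r = D := hD.sqrt_mul_sqrt
  have ha : (blockA D S).IsPositive := hD.conj_starProjection S
  have hadj : adjoint (r * P) = P * r := by
    rw [← star_eq_adjoint, star_mul, hr.star_eq, isSelfAdjoint_projL.star_eq]
  have hnorm : ∀ x, ‖(r * P) x‖ ≤ ‖CFC.sqrt (blockA D S) x‖ := by
    intro x
    refine (sq_eq_sq₀ (norm_nonneg _) (norm_nonneg _) |>.mp ?_).le
    rw [ha.norm_sqrt_apply_sq, apply_norm_sq_eq_inner_adjoint_left, ← mul_def, hadj,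
      show P * r * (r * P) = P * (r * r) * P by noncomm_ring, hrr]
    rfl
  obtain ⟨C, hC⟩ := exists_comp_eq_of_norm_apply_le (r * P) (CFC.sqrt (blockA D S)) hnorm
  have hC' : CFC.sqrt (blockA D S) * adjoint C = P * r := by
    rw [← hadj, ← hC, ← mul_def, ← star_eq_adjoint, ← star_eq_adjoint, star_mul,
      (isSelfAdjoint_sqrt _).star_eq]
  have hb : blockB D S = CFC.sqrt (blockA D S) * (adjoint C * r * (1 - P)) :=
    calc blockB D S = P * (r * r) * (1 - P) := by rw [hrr]; rfl
      _ = P * r * r * (1 - P) := by noncomm_ring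
      _ = _ := by rw [← hC']; noncomm_ring
  rw [hb]
  exact LinearMap.range_comp_le_range _ _

theorem range_blockB_le_of_mem_Mminus (hX : X ∈ Mminus B Sᗮ) :
    (blockB B S).range ≤ (CFC.sqrt (blockA B S)).range := by
  have hPX := projL_mul_eq_zero_iff.mpr hX.2.2
  rw [← blockA_sub_of_projL_mul_eq_zero hPX, ← blockB_sub_of_projL_mul_eq_zero hPX]
  exact range_blockB_le_range_sqrt_blockA hX.2.1

end RangeInclusion

section Schur

variable {S : Submodule ℂ H} [S.HasOrthogonalProjection] {B : H →L[ℂ] H}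

theorem isMaxOf_Mminus_blockC_sub (hB : IsSelfAdjoint B) (ha : (blockA B S).IsPositive)
    {f : H →L[ℂ] H} (hf : CFC.sqrt (blockA B S) * f = blockB B S)
    (hfr : f.range ≤ (CFC.sqrt (blockA B S)).kerᗮ) :
    IsMaxOf (Mminus B Sᗮ) (blockC B S - adjoint f * f) := by
  set P := projL S
  have hP : IsSelfAdjoint P := isSelfAdjoint_projL
  set m := CFC.sqrt (blockA B S)
  have hm : IsSelfAdjoint m := isSelfAdjoint_sqrt _
  have hmP : m * P = m := ha.sqrt_mul_eq_of_mul_eq blockA_mul_projL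
  have hfP : f * P = 0 := by
    refine eq_of_mul_eq_mul ?_ ((LinearMap.range_comp_le_range _ _).trans hfr) (by simp)
    rw [← mul_assoc, hf, mul_zero, blockB_mul_projL]
  set Z := blockC B S - adjoint f * f
  have hZ : IsSelfAdjoint Z :=
    (isSelfAdjoint_blockC hB).sub (IsSelfAdjoint.star_mul_self f)
  have hZP : Z * P = 0 := by
    rw [sub_mul, blockC_mul_projL, mul_assoc, hfP, mul_zero, sub_zero]
  have hfm : adjoint f * m = adjoint (blockB B S) := by
    rw [← hf, ← star_eq_adjoint, ← star_eq_adjoint, star_mul, hm.star_eq]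
  have hBZ : B - Z = adjoint (m + f) * (m + f) := by
    rw [map_add, hm.adjoint_eq, add_mul, mul_add, mul_add, ha.sqrt_mul_sqrt, hf, hfm]
    conv_lhs => rw [eq_blockA_add_blockB_add_adjoint_add_blockC (S := S) hB]
    simp only [Z]
    abel
  have hT : (m + f).range ≤ ((m + f) * P).range.topologicalClosure := by
    rw [add_mul, hmP, hfP, add_zero, ← hm.orthogonal_ker]
    rintro _ ⟨x, rfl⟩
    refine Submodule.add_mem _ ?_ (hfr ⟨x, rfl⟩)
    exact hm.orthogonal_ker ▸ m.range.le_topologicalClosure ⟨x, rfl⟩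
  refine ⟨⟨hZ, hBZ ▸ isPositive_adjoint_comp_self _, ?_⟩, fun X hX => ?_⟩
  · refine projL_mul_eq_zero_iff.mp ?_
    simpa only [star_mul, hZ.star_eq, hP.star_eq, star_zero] using congr_arg star hZP
  · refine isPositive_of_isPositive_adjoint_mul_add (hZ.sub hX.1) hP
      (by rw [sub_mul, hZP, mul_projL_of_mem_Mminus hX, sub_zero]) ?_ hT
    rw [← hBZ, sub_add_sub_cancel]
    exact hX.2.1

theorem IsSchur.eq_blockC_sub {Z f : H →L[ℂ] H} (hZ : IsSchur B S Z) (ha : (blockA B S).IsPositive)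
    (hf : CFC.sqrt (blockA B S) * f = blockB B S)
    (hfr : f.range ≤ (CFC.sqrt (blockA B S)).kerᗮ) : Z = blockC B S - adjoint f * f := by
  obtain ⟨m, u, g, hm, -, -, hau, hmg, hgr, rfl⟩ := hZ
  obtain rfl := hm.eq_sqrt ha
  rw [pow_two, ha.sqrt_mul_sqrt] at hau
  have hug : u * g = g := mul_eq_self_of_range_le hau.symm (hgr.trans_eq ha.closure_range_sqrt)
  have hgr' : g.range ≤ (CFC.sqrt (blockA B S)).kerᗮ :=
    hgr.trans_eq (isSelfAdjoint_sqrt _).orthogonal_ker.symm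
  rw [hug, eq_of_mul_eq_mul (hmg.trans hf.symm) hgr' hfr]

end Schur

section Krein

theorem range_le_map_iff_of_mul_self_eq_one {E : Type*} [NormedAddCommGroup E] [NormedSpace ℂ E]
    {J : E →L[ℂ] E} (hJ : J * J = 1) (X : E →L[ℂ] E) (T : Submodule ℂ E) :
    X.range ≤ T.map (J : E →ₗ[ℂ] E) ↔ (J * X).range ≤ T := by
  have hJJ : ∀ x, J (J x) = x := fun x => congr($hJ x)
  constructor
  · rintro h _ ⟨x, rfl⟩
    obtain ⟨z, hz, hzx⟩ := h ⟨x, rfl⟩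
    change J (X x) ∈ T
    rwa [← show J z = X x from hzx, hJJ]
  · rintro h _ ⟨x, rfl⟩
    exact ⟨J (X x), h ⟨x, rfl⟩, hJJ _⟩

variable {J W : H →L[ℂ] H}

theorem mem_Nminus_map_iff (hJ : J * J = 1) (X : H →L[ℂ] H) (T : Submodule ℂ H) :
    X ∈ Nminus J W (T.map (J : H →ₗ[ℂ] H)) ↔ J * X ∈ Mminus (J * W) T := by
  simp only [Nminus, Mminus, Set.mem_ofPred_eq, mul_sub, range_le_map_iff_of_mul_self_eq_one hJ]

theorem kMaxOf_Nminus_map_iff (hJ : J * J = 1) (Y : H →L[ℂ] H) (T : Submodule ℂ H) :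
    KMaxOf J (Nminus J W (T.map (J : H →ₗ[ℂ] H))) Y ↔ IsMaxOf (Mminus (J * W) T) (J * Y) := by
  have hJJ : ∀ X, J * (J * X) = X := fun X => by rw [← mul_assoc, hJ, one_mul]
  constructor
  · rintro ⟨hY, hmax⟩
    refine ⟨(mem_Nminus_map_iff hJ Y T).mp hY, fun X hX => ?_⟩
    have hJX := hmax (J * X) ((mem_Nminus_map_iff hJ _ T).mpr (by rwa [hJJ]))
    rwa [mul_sub, hJJ] at hJX
  · rintro ⟨hY, hmax⟩
    refine ⟨(mem_Nminus_map_iff hJ Y T).mpr hY, fun X hX => ?_⟩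
    rw [mul_sub]
    exact hmax (J * X) ((mem_Nminus_map_iff hJ X T).mp hX)

end Krein

theorem stmt_16_general (J W : H →L[ℂ] H) (hJ2 : J * J = 1)
    (hW : IsSelfAdjoint (J * W)) (S : Submodule ℂ H) [CompleteSpace S] :
    (((∀ s ∈ S, 0 ≤ (inner ℂ ((J * W) s) s : ℂ).re) ∧ IsWeaklyComplementable (J * W) S) ↔
      ∃ Y, KMaxOf J (Nminus J W (Sᗮ.map (J : H →ₗ[ℂ] H))) Y) ∧
    (∀ Y, KMaxOf J (Nminus J W (Sᗮ.map (J : H →ₗ[ℂ] H))) Y → ∀ Z, IsSchur (J * W) S Z → Y = J * Z) := by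
  simp only [kMaxOf_Nminus_map_iff hJ2]
  refine ⟨⟨?_, ?_⟩, ?_⟩
  · rintro ⟨hS, m, hm, hbm⟩
    have ha := isPositive_blockA hW hS
    rw [hm.eq_sqrt ha] at hbm
    obtain ⟨f, hf, hfr⟩ := exists_mul_eq_of_range_le hbm
    refine ⟨J * (blockC (J * W) S - adjoint f * f), ?_⟩
    rw [← mul_assoc, hJ2, one_mul]
    exact isMaxOf_Mminus_blockC_sub hW ha hf hfr
  · rintro ⟨Y, hY⟩
    have hS := re_inner_nonneg_of_mem_Mminus hY.1
    exact ⟨hS, _, (isPositive_blockA hW hS).isSqrtAbs_sqrt, range_blockB_le_of_mem_Mminus hY.1⟩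
  · intro Y hY Z hZ
    have ha := isPositive_blockA hW (re_inner_nonneg_of_mem_Mminus hY.1)
    obtain ⟨f, hf, hfr⟩ := exists_mul_eq_of_range_le (range_blockB_le_of_mem_Mminus hY.1)
    rw [hZ.eq_blockC_sub ha hf hfr, ← hY.unique (isMaxOf_Mminus_blockC_sub hW ha hf hfr),
      ← mul_assoc, hJ2, one_mul]

/-- `S` is `W`-nonnegative (in the Krein sense) and `JW` is `S`-weakly complementable iff
`N⁻(W, S^{[⊥]})` has a Krein-order maximum; in that case the maximum is `W_{/[S]} = J(JW)_{/S}`. -/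
theorem stmt_16 (J W : H →L[ℂ] H) (hJ : IsSelfAdjoint J) (hJ2 : J * J = 1)
    (hW : IsSelfAdjoint (J * W)) (S : Submodule ℂ H) [CompleteSpace S] :
    (((∀ s ∈ S, 0 ≤ (inner ℂ ((J * W) s) s : ℂ).re) ∧ IsWeaklyComplementable (J * W) S) ↔
      ∃ Y, KMaxOf J (Nminus J W (Sᗮ.map (J : H →ₗ[ℂ] H))) Y) ∧
    (∀ Y, KMaxOf J (Nminus J W (Sᗮ.map (J : H →ₗ[ℂ] H))) Y → ∀ Z, IsSchur (J * W) S Z → Y = J * Z) :=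
  stmt_16_general J W hJ2 hW S
end
end
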